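/- Fix an integer n ≥ 1 and for 0 ≤ j ≤ n−1 set μ_j := (2/ln 2)·(2 + n/(n−j)). Let Y_0, …, Y_{n−1} be independent real random variables where Y_j is exponentially distributed with mean μ_j, let μ := Σ_j μ_j and Y := Σ_j Y_j. Then for every δ > 0, Pr[Y ≥ (1+δ)·μ] ≤ n^{−(1 + δ − ln 4)/2}. -/

import Mathlib

open MeasureTheory ProbabilityTheory

section AuxMatching
open Real Set
open scoped NNReal ENNReal

lemma aux_integral_exp_neg {b : ℝ} (hb : 0 < b) :
    ∫ x in Ioi (0:ℝ), Real.exp (-(b * x)) = b⁻¹ := by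
  have h := integral_comp_mul_left_Ioi (fun y => Real.exp (-y)) 0 hb
  simp only [mul_zero, integral_exp_neg_Ioi_zero, smul_eq_mul, mul_one] at h
  exact h

lemma aux_pdfReal_eq (r x : ℝ) :
    exponentialPDFReal r x = if 0 ≤ x then r * Real.exp (-(r * x)) else 0 := by
  rw [exponentialPDFReal, gammaPDFReal]
  simp only [rpow_one, Real.Gamma_one, div_one, sub_self, rpow_zero, mul_one]

lemma aux_expMeasure_eq (r : ℝ) :
    expMeasure r = volume.withDensity
      (fun x => ((exponentialPDFReal r x).toNNReal : ENNReal)) := by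
  rfl

-- convexity bound
lemma aux_inv_le_exp {x : ℝ} (h0 : 0 ≤ x) (h2 : x ≤ 1/2) :
    (1 - x)⁻¹ ≤ Real.exp (Real.log 4 * x) := by
  have hlog4 : Real.log 4 = 2 * Real.log 2 := by
    rw [show (4:ℝ) = 2^2 by norm_num, Real.log_pow]; push_cast; ring
  have key : Real.exp (-(Real.log 4 * x)) ≤ 1 - x := by
    have ha : (0:ℝ) ≤ 1 - 2*x := by linarith
    have hb : (0:ℝ) ≤ 2*x := by linarith
    have hab : (1 - 2*x) + 2*x = 1 := by ring
    have hc := convexOn_exp.2 (Set.mem_univ (0:ℝ)) (Set.mem_univ (-Real.log 2)) ha hb hab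
    simp only [smul_eq_mul, mul_zero, zero_add, Real.exp_zero, Real.exp_neg,
      Real.exp_log two_pos] at hc
    calc Real.exp (-(Real.log 4 * x)) = Real.exp (2*x * (-Real.log 2)) := by
          rw [hlog4]; ring_nf
      _ ≤ (1-2*x)*1 + 2*x * (2:ℝ)⁻¹ := hc
      _ = 1 - x := by ring
  have hx1 : (0:ℝ) < 1 - x := by linarith
  rw [inv_le_iff_one_le_mul₀ hx1]
  calc (1:ℝ) = Real.exp (Real.log 4 * x) * Real.exp (-(Real.log 4 * x)) := by
        rw [← Real.exp_add]; simp
    _ ≤ Real.exp (Real.log 4 * x) * (1 - x) := by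
        exact mul_le_mul_of_nonneg_left key (Real.exp_nonneg _)

lemma aux_fun_eq (r t : ℝ) (hr : 0 < r) :
    (fun x => ((exponentialPDFReal r x).toNNReal : ℝ≥0) • Real.exp (t * x)) =
      Set.indicator (Ici (0:ℝ)) (fun x => r * Real.exp (-((r - t) * x))) := by
  funext x
  rw [NNReal.smul_def, Real.coe_toNNReal _ (exponentialPDFReal_nonneg hr x), aux_pdfReal_eq]
  by_cases hx : 0 ≤ x
  · rw [if_pos hx, Set.indicator_of_mem (Set.mem_Ici.mpr hx)]
    rw [smul_eq_mul, mul_assoc, ← Real.exp_add]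
    congr 1
    ring
  · rw [if_neg hx, Set.indicator_of_notMem (by simpa using hx), zero_smul]

lemma aux_exp_integrable {r t : ℝ} (hr : 0 < r) (htr : t < r) :
    Integrable (fun x => Real.exp (t * x)) (expMeasure r) := by
  rw [aux_expMeasure_eq,
    integrable_withDensity_iff_integrable_smul (measurable_exponentialPDFReal r).real_toNNReal]
  rw [aux_fun_eq r t hr, integrable_indicator_iff measurableSet_Ici]
  refine Iff.mpr integrableOn_Ici_iff_integrableOn_Ioi ?_
  have h := (exp_neg_integrableOn_Ioi 0 (by linarith : 0 < r - t)).const_mul r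
  have he : ∀ x : ℝ, -((r - t) * x) = -(r - t) * x := fun x => (neg_mul _ _).symm
  simp_rw [he]
  exact h

lemma aux_exp_integral {r t : ℝ} (hr : 0 < r) (htr : t < r) :
    ∫ x, Real.exp (t * x) ∂(expMeasure r) = r / (r - t) := by
  rw [aux_expMeasure_eq,
    integral_withDensity_eq_integral_smul (measurable_exponentialPDFReal r).real_toNNReal,
    aux_fun_eq r t hr, integral_indicator measurableSet_Ici,
    integral_Ici_eq_integral_Ioi, MeasureTheory.integral_const_mul,
    aux_integral_exp_neg (by linarith : 0 < r - t), div_eq_mul_inv]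

lemma aux_mgf {Ω : Type*} [MeasureSpace Ω] (Yj : Ω → ℝ) (hYj : Measurable Yj) {m t : ℝ}
    (hm : 0 < m) (hlaw : Measure.map Yj ℙ = expMeasure (1/m)) (ht : t * m < 1) :
    mgf Yj ℙ t = (1 - t * m)⁻¹ := by
  have hr : 0 < 1/m := by positivity
  have htr : t < 1/m := by
    rw [lt_div_iff₀ hm]; exact ht
  have hg : AEStronglyMeasurable (fun x => Real.exp (t * x)) (Measure.map Yj ℙ) :=
    ((measurable_id.const_mul t).exp).aestronglyMeasurable
  have h1 : mgf Yj ℙ t = ∫ x, Real.exp (t * x) ∂(Measure.map Yj ℙ) :=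
    (integral_map hYj.aemeasurable hg).symm
  rw [h1, hlaw, aux_exp_integral hr htr]
  field_simp

lemma aux_integrable {Ω : Type*} [MeasureSpace Ω] (Yj : Ω → ℝ) (hYj : Measurable Yj) {m t : ℝ}
    (hm : 0 < m) (hlaw : Measure.map Yj ℙ = expMeasure (1/m)) (ht : t * m < 1) :
    Integrable (fun ω => Real.exp (t * Yj ω)) ℙ := by
  have hr : 0 < 1/m := by positivity
  have htr : t < 1/m := by rw [lt_div_iff₀ hm]; exact ht
  have hg : AEStronglyMeasurable (fun x => Real.exp (t * x)) (Measure.map Yj ℙ) :=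
    ((measurable_id.const_mul t).exp).aestronglyMeasurable
  have := (integrable_map_measure hg hYj.aemeasurable).mp (by rw [hlaw]; exact aux_exp_integrable hr htr)
  exact this

lemma aux_log_le_harmonic (n : ℕ) :
    Real.log ((n : ℝ) + 1) ≤ ∑ k ∈ Finset.range n, (1:ℝ)/((k:ℝ)+1) := by
  induction n with
  | zero => simp
  | succ n ih =>
    rw [Finset.sum_range_succ]
    have hpos : (0:ℝ) < (n:ℝ) + 1 := by positivity
    have h2 : Real.log (((n:ℝ)+1+1)/((n:ℝ)+1)) ≤ 1/((n:ℝ)+1) := by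
      have h := Real.log_le_sub_one_of_pos
        (show (0:ℝ) < ((n:ℝ)+1+1)/((n:ℝ)+1) by positivity)
      have heq : ((n:ℝ)+1+1)/((n:ℝ)+1) - 1 = 1/((n:ℝ)+1) := by field_simp; ring
      linarith [heq ▸ h]
    have h3 : Real.log ((n:ℝ)+1+1) = Real.log ((n:ℝ)+1) +
        Real.log (((n:ℝ)+1+1)/((n:ℝ)+1)) := by
      rw [Real.log_div (by positivity) (ne_of_gt hpos)]; ring
    push_cast
    linarith

lemma aux_sum_inv (n : ℕ) (hn : 1 ≤ n) :
    ∑ j : Fin n, (1:ℝ)/((n:ℝ) - ((j:ℕ):ℝ)) = ∑ k ∈ Finset.range n, (1:ℝ)/((k:ℝ)+1) := by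
  rw [Fin.sum_univ_eq_sum_range (fun j => (1:ℝ)/((n:ℝ) - (j:ℝ)))]
  rw [← Finset.sum_range_reflect (fun j => (1:ℝ)/((n:ℝ) - (j:ℝ))) n]
  apply Finset.sum_congr rfl
  intro j hj
  have hj' := Finset.mem_range.mp hj
  have h1 : n - 1 - j + (1 + j) = n := by omega
  have h2 : ((n - 1 - j : ℕ) : ℝ) + (1 + (j:ℝ)) = (n:ℝ) := by
    exact_mod_cast congrArg (Nat.cast : ℕ → ℝ) h1
  congr 1
  linarith

end AuxMatching

/-- High-probability bound for the total running time in the matching algorithm: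
with `μ j = (2/ln 2)·(2 + n/(n-j))` and `Y j` independent exponentials with mean `μ j`,
for every `δ > 0`, `Pr[Σ_j Y j ≥ (1+δ)·Σ_j μ j] ≤ n^{-(1 + δ - ln 4)/2}`. -/
theorem matching_running_time_tail_bound {Ω : Type*} [MeasureSpace Ω]
    [IsProbabilityMeasure (ℙ : Measure Ω)]
    (n : ℕ) (hn : 1 ≤ n)
    (μ : Fin n → ℝ)
    (hμdef : ∀ j : Fin n, μ j = (2 / Real.log 2) * (2 + (n : ℝ) / ((n : ℝ) - (j : ℝ))))
    (Y : Fin n → Ω → ℝ) (hY : ∀ j, Measurable (Y j))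
    (hind : iIndepFun Y ℙ)
    (hlaw : ∀ j, Measure.map (Y j) ℙ = expMeasure (1 / μ j))
    (δ : ℝ) (hδ : 0 < δ) :
    (ℙ {ω | (1 + δ) * (∑ j, μ j) ≤ ∑ j, Y j ω}).toReal ≤
      (n : ℝ) ^ (-(1 + δ - Real.log 4) / 2) := by
  have hL : 0 < Real.log 2 := Real.log_pos one_lt_two
  have hn1 : (1:ℝ) ≤ (n:ℝ) := by exact_mod_cast hn
  have hnpos : (0:ℝ) < (n:ℝ) := by linarith
  have hsub : ∀ j : Fin n, (1:ℝ) ≤ (n:ℝ) - ((j:ℕ):ℝ) := by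
    intro j
    have h := j.isLt
    have h2 : ((j:ℕ):ℝ) + 1 ≤ (n:ℝ) := by exact_mod_cast Nat.succ_le_of_lt h
    linarith
  set M : ℝ := (2 / Real.log 2) * (2 + (n:ℝ)) with hM
  have hMpos : 0 < M := by
    apply mul_pos (by positivity) (by linarith)
  set t : ℝ := 1 / (2 * M) with ht
  have htpos : 0 < t := by positivity
  have hμpos : ∀ j, 0 < μ j := by
    intro j
    rw [hμdef j]
    have h1 := hsub j
    have hd : 0 ≤ (n:ℝ)/((n:ℝ) - ((j:ℕ):ℝ)) := by positivity
    apply mul_pos (by positivity) (by linarith)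
  have hμle : ∀ j, μ j ≤ M := by
    intro j
    rw [hμdef j, hM]
    have h1 := hsub j
    have h2 : (n:ℝ)/((n:ℝ) - ((j:ℕ):ℝ)) ≤ (n:ℝ) := by
      rw [div_le_iff₀ (by linarith)]
      nlinarith
    have h3 : (0:ℝ) < 2 / Real.log 2 := by positivity
    nlinarith
  have htμ : ∀ j, t * μ j ≤ 1/2 := by
    intro j
    have h1 := hμle j
    have h2 := (hμpos j).le
    have h3 : t * μ j ≤ t * M := mul_le_mul_of_nonneg_left h1 htpos.le
    have h4 : t * M = 1/2 := by
      rw [ht]; field_simp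
    linarith
  have hmgf : ∀ j, mgf (Y j) ℙ t = (1 - t * μ j)⁻¹ := fun j =>
    aux_mgf (Y j) (hY j) (hμpos j) (hlaw j) (by linarith [htμ j])
  have hint : ∀ j, Integrable (fun ω => Real.exp (t * Y j ω)) ℙ := fun j =>
    aux_integrable (Y j) (hY j) (hμpos j) (hlaw j) (by linarith [htμ j])
  have hmgf_le : ∀ j, mgf (Y j) ℙ t ≤ Real.exp (Real.log 4 * (t * μ j)) := by
    intro j
    rw [hmgf j]
    exact aux_inv_le_exp (mul_nonneg htpos.le (hμpos j).le) (htμ j)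
  set S : ℝ := ∑ j, μ j with hS
  have hset : {ω | (1 + δ) * S ≤ ∑ j, Y j ω} = {ω | (1+δ)*S ≤ (∑ j, Y j) ω} := by
    ext ω; simp [Finset.sum_apply]
  have hintsum : Integrable (fun ω => Real.exp (t * (∑ j, Y j) ω)) ℙ :=
    hind.integrable_exp_mul_sum hY (fun i _ => hint i)
  have hchern := measure_ge_le_exp_mul_mgf (μ := ℙ) (X := ∑ j, Y j) ((1+δ)*S) htpos.le hintsum
  rw [hind.mgf_sum hY Finset.univ] at hchern
  have hprod : ∏ j, mgf (Y j) ℙ t ≤ Real.exp (Real.log 4 * t * S) := by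
    calc ∏ j, mgf (Y j) ℙ t ≤ ∏ j, Real.exp (Real.log 4 * (t * μ j)) := by
          apply Finset.prod_le_prod
          · intro j _
            rw [hmgf j]
            have h5 : (0:ℝ) < 1 - t * μ j := by linarith [htμ j]
            exact (inv_pos.mpr h5).le
          · intro j _; exact hmgf_le j
      _ = Real.exp (∑ j, Real.log 4 * (t * μ j)) := (Real.exp_sum _ _).symm
      _ = Real.exp (Real.log 4 * t * S) := by
          rw [hS, Finset.mul_sum]
          congr 1
          exact Finset.sum_congr rfl (fun j _ => by ring)
  have hbound : (ℙ {ω | (1 + δ) * S ≤ ∑ j, Y j ω}).toReal ≤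
      Real.exp (-(t*S) * (1 + δ - Real.log 4)) := by
    calc (ℙ {ω | (1 + δ) * S ≤ ∑ j, Y j ω}).toReal
        = (ℙ {ω | (1+δ)*S ≤ (∑ j, Y j) ω}).toReal := by rw [hset]
      _ ≤ Real.exp (-t * ((1+δ)*S)) * ∏ j, mgf (Y j) ℙ t := hchern
      _ ≤ Real.exp (-t * ((1+δ)*S)) * Real.exp (Real.log 4 * t * S) :=
          mul_le_mul_of_nonneg_left hprod (Real.exp_nonneg _)
      _ = Real.exp (-(t*S) * (1 + δ - Real.log 4)) := by
          rw [← Real.exp_add]; congr 1; ring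
  set c : ℝ := 1 + δ - Real.log 4 with hcdef
  by_cases hc : c ≤ 0
  · have h1 : (ℙ {ω | (1 + δ) * S ≤ ∑ j, Y j ω}).toReal ≤ 1 := by
      have h := prob_le_one (μ := (ℙ : Measure Ω)) (s := {ω | (1 + δ) * S ≤ ∑ j, Y j ω})
      calc (ℙ {ω | (1 + δ) * S ≤ ∑ j, Y j ω}).toReal ≤ (1 : ENNReal).toReal :=
            ENNReal.toReal_mono ENNReal.one_ne_top h
        _ = 1 := ENNReal.toReal_one
    have h2 : (1:ℝ) ≤ (n:ℝ) ^ (-c/2) := by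
      calc (1:ℝ) = (n:ℝ)^(0:ℝ) := (Real.rpow_zero _).symm
        _ ≤ (n:ℝ)^(-c/2) := Real.rpow_le_rpow_of_exponent_le hn1 (by linarith)
    linarith
  · push_neg at hc
    set H : ℝ := ∑ k ∈ Finset.range n, (1:ℝ)/((k:ℝ)+1) with hHdef
    have hSval : S = (2/Real.log 2) * (2*(n:ℝ) + (n:ℝ) * H) := by
      rw [hS]
      simp only [hμdef]
      rw [← Finset.mul_sum]
      congr 1
      rw [Finset.sum_add_distrib, Finset.sum_const, Finset.card_univ, Fintype.card_fin,
        nsmul_eq_mul]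
      congr 1
      · ring
      · rw [hHdef, ← aux_sum_inv n hn, Finset.mul_sum]
        exact Finset.sum_congr rfl (fun j _ => by rw [mul_one_div])
    have hHge : Real.log (n:ℝ) ≤ H := by
      have h1 : Real.log (n:ℝ) ≤ Real.log ((n:ℝ)+1) :=
        Real.log_le_log hnpos (by linarith)
      exact h1.trans (aux_log_le_harmonic n)
    have hlogn : Real.log (n:ℝ) ≤ (n:ℝ) := by
      linarith [Real.log_le_sub_one_of_pos hnpos]
    have hlogn0 : 0 ≤ Real.log (n:ℝ) := Real.log_nonneg hn1
    have hMS : M * Real.log (n:ℝ) ≤ S := by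
      rw [hSval, hM]
      have key : (2 + (n:ℝ)) * Real.log (n:ℝ) ≤ 2*(n:ℝ) + (n:ℝ) * H := by
        nlinarith [mul_le_mul_of_nonneg_left hHge hnpos.le]
      have h3 : (0:ℝ) ≤ 2 / Real.log 2 := by positivity
      nlinarith
    have htS : Real.log (n:ℝ) / 2 ≤ t * S := by
      have h1 : t * S = S / (2*M) := by rw [ht]; ring
      rw [h1, div_le_div_iff₀ two_pos (by positivity)]
      nlinarith
    have hfin : Real.exp (-(t*S) * c) ≤ (n:ℝ) ^ (-c/2) := by
      rw [Real.rpow_def_of_pos hnpos]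
      apply Real.exp_le_exp.mpr
      have : Real.log (n:ℝ) * (-c/2) = -(Real.log (n:ℝ)/2) * c := by ring
      rw [this]
      have := mul_le_mul_of_nonneg_right htS hc.le
      nlinarith
    exact hbound.trans hfin
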